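/- Fix L ∈ ℕ and τ ∈ Ω. If z ∈ Z_{L,τ}(𝓗), x ∈ W̃ ∖ Λ, and ℓ(x) = L, then z_x = 0. -/

import Mathlib

section

variable {B W Ω : Type*} [Group W] [Group Ω] {M : CoxeterMatrix B}

/-- The length function on `W̃ = W ⋊ Ω`, extending the Coxeter length of `(W, S)` by
`ℓ(wτ) = ℓ(w)`. -/
noncomputable def extLen (cs : CoxeterSystem M W) {φ : Ω →* MulAut W}
    (x : W ⋊[φ] Ω) : ℕ := cs.length x.left

/-- `x ∈ W̃` is a simple reflection, i.e. an element of `S` viewed inside `W̃`. -/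
def IsSimpleElt (cs : CoxeterSystem M W) {φ : Ω →* MulAut W} (x : W ⋊[φ] Ω) : Prop :=
  ∃ i : B, x = SemidirectProduct.inl (cs.simple i)

/-- The sequence of iterated conjugates `x, s₁xs₁, s₂s₁xs₁s₂, …`. -/
def conjSeqW {φ : Ω →* MulAut W} (x : W ⋊[φ] Ω) (ss : ℕ → W ⋊[φ] Ω) : ℕ → W ⋊[φ] Ω
  | 0 => x
  | n + 1 => ss n * conjSeqW x ss n * ss n

/-- `x` and `x′` are laterally conjugate: `x′` is obtained from `x` by a sequence of
length-preserving conjugations by simple reflections. -/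
noncomputable def LaterallyConj (cs : CoxeterSystem M W) {φ : Ω →* MulAut W}
    (x x' : W ⋊[φ] Ω) : Prop :=
  ∃ (n : ℕ) (ss : ℕ → W ⋊[φ] Ω), (∀ i < n, IsSimpleElt cs (ss i)) ∧
    (∀ i < n, extLen cs (conjSeqW x ss (i + 1)) = extLen cs x) ∧ x' = conjSeqW x ss n

/-- `x` has the Direct Diamond Property. -/
noncomputable def DirectDiamond (cs : CoxeterSystem M W) {φ : Ω →* MulAut W}
    (x : W ⋊[φ] Ω) : Prop :=
  ∃ s : W ⋊[φ] Ω, IsSimpleElt cs s ∧ extLen cs x < extLen cs (s * x) ∧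
    extLen cs x < extLen cs (x * s) ∧ s * x * s ≠ x

/-- `x` has the Diamond Property: it is laterally conjugate to an element with the
Direct Diamond Property. -/
noncomputable def Diamond (cs : CoxeterSystem M W) {φ : Ω →* MulAut W}
    (x : W ⋊[φ] Ω) : Prop :=
  ∃ x' : W ⋊[φ] Ω, LaterallyConj cs x x' ∧ DirectDiamond cs x'

end


/-- The set of `W₀`-conjugacy classes of elements of `Λ`. -/
def latClasses {W Ω : Type*} [Group W] [Group Ω] {φ : Ω →* MulAut W}
    (Λ W₀ : Subgroup (W ⋊[φ] Ω)) : Set (Set (W ⋊[φ] Ω)) :=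
  {O | ∃ t ∈ Λ, O = {x | ∃ u ∈ W₀, x = u * t * u⁻¹}}

/-!
For a central `z` supported in lengths `≤ L` and `ℓ(w) > L`, the coefficient of `T_w` in
`T_s z` is `z_{sw}` and the one in `z T_s` is `z_{ws}`: every `b` in the support of `z` has
`ℓ(b) < ℓ(w)`, so only the leading term `T_{sb}` (resp. `T_{bs}`) of `T_s T_b`
(resp. `T_b T_s`) can reach `T_w`. Hence `z_{sw} = z_{ws}`. Taking `w = sy` or `w = ys` shows
that coefficients at length `L` are invariant under lateral conjugation, and that they vanish at
an element `y` with the direct diamond property, where `ℓ(sys) = L + 2` forces `z_{sys} = 0`.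

The Coxeter-theoretic input is that `sys = y` whenever `ℓ(sy) = ℓ(ys)` and
`ℓ(sys) = ℓ(y)`, a consequence of the exchange condition, which follows from Tits' sign
representation of `W` on `W × {±1}`.
-/

open Finset

open scoped Classical in
noncomputable def reflSign {α : Type*} (w t : α) : ℤˣ := if w = t then -1 else 1

lemma reflSign_mul_self {α : Type*} (w t : α) : reflSign w t * reflSign w t = 1 := by
  unfold reflSign; split_ifs <;> simp

section ConjFlip

variable {G : Type*} [Group G]

lemma conj_eq_iff_eq_conj (c w u : G) : c * w * c⁻¹ = u ↔ w = c⁻¹ * u * c := by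
  constructor <;> rintro rfl <;> group

lemma reflSign_conj (c w u : G) : reflSign (c * w * c⁻¹) u = reflSign w (c⁻¹ * u * c) := by
  classical
  unfold reflSign; exact if_congr (conj_eq_iff_eq_conj c w u) rfl rfl

lemma mul_mul_self_eq_conj {a : G} (ha : a * a = 1) (w : G) : a * w * a = a * w * a⁻¹ := by
  rw [inv_eq_of_mul_eq_one_right ha]

noncomputable def conjFlip (a : G) (ha : a * a = 1) : Equiv.Perm (G × ℤˣ) :=
  Function.Involutive.toPerm (fun p => (a * p.1 * a, reflSign p.1 a * p.2)) fun p => by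
    refine Prod.ext ?_ ?_
    · simp only [← mul_assoc, ha, one_mul]; rw [mul_assoc, ha, mul_one]
    · dsimp only
      rw [mul_mul_self_eq_conj ha, reflSign_conj, inv_mul_cancel, one_mul, ← mul_assoc,
        reflSign_mul_self, one_mul]

lemma conjFlip_apply {a : G} (ha : a * a = 1) (w : G) (ε : ℤˣ) :
    conjFlip a ha (w, ε) = (a * w * a, reflSign w a * ε) := rfl

lemma conjFlip_mul_pow_apply {a b : G} (ha : a * a = 1) (hb : b * b = 1) (k : ℕ) (w : G)
    (ε : ℤˣ) : ((conjFlip a ha * conjFlip b hb) ^ k) (w, ε) =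
      ((a * b) ^ k * w * ((a * b) ^ k)⁻¹,
        (∏ r ∈ range (2 * k), reflSign w ((b * a) ^ r * b)) * ε) := by
  have hab : (a * b)⁻¹ = b * a := by
    rw [mul_inv_rev, inv_eq_of_mul_eq_one_right ha, inv_eq_of_mul_eq_one_right hb]
  have hstep (w : G) : a * (b * w * b) * a = (a * b) * w * (a * b)⁻¹ := by
    rw [hab]; simp only [mul_assoc]
  have hshift (r : ℕ) : (a * b)⁻¹ * ((b * a) ^ r * b) * (a * b) = (b * a) ^ (r + 2) * b := by
    rw [hab, pow_succ', pow_succ]; simp only [mul_assoc]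
  induction k generalizing w ε with
  | zero => simp
  | succ k ih =>
    rw [pow_succ, Equiv.Perm.mul_apply, Equiv.Perm.mul_apply, conjFlip_apply, conjFlip_apply,
      hstep, ih]
    refine Prod.ext ?_ ?_
    · simp only [pow_succ, mul_inv_rev, mul_assoc]
    · simp only [reflSign_conj, hshift, mul_mul_self_eq_conj hb]
      rw [mul_add, prod_range_succ', prod_range_succ']
      simp only [pow_zero, one_mul, zero_add, pow_one, ← mul_assoc,
        inv_eq_of_mul_eq_one_right hb]

lemma conjFlip_mul_pow_eq_one {a b : G} (ha : a * a = 1) (hb : b * b = 1) {m : ℕ}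
    (hm : (a * b) ^ m = 1) : (conjFlip a ha * conjFlip b hb) ^ m = 1 := by
  have hm' : (b * a) ^ m = 1 := by
    rw [← inv_inj, ← inv_pow, mul_inv_rev, inv_eq_of_mul_eq_one_right ha,
      inv_eq_of_mul_eq_one_right hb, hm, inv_one]
  ext ⟨w, ε⟩ <;> rw [conjFlip_mul_pow_apply, hm]
  · simp
  · rw [two_mul, prod_range_add]
    simp only [pow_add, hm', one_mul, ← sq, Int.units_sq, Equiv.Perm.one_apply]

end ConjFlip

namespace CoxeterSystem

variable {B W : Type*} [Group W] {M : CoxeterMatrix B} (cs : CoxeterSystem M W)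

local prefix:100 "σ" => cs.simple
local prefix:100 "ℓ" => cs.length
local prefix:100 "π" => cs.wordProd

lemma isLiftable_conjFlip : M.IsLiftable fun i => conjFlip (σ i) (cs.simple_mul_simple_self i) :=
  fun i j => conjFlip_mul_pow_eq_one _ _ (cs.simple_mul_simple_pow i j)

noncomputable def signRep : W →* Equiv.Perm (W × ℤˣ) :=
  cs.lift ⟨_, cs.isLiftable_conjFlip⟩

lemma signRep_simple (i : B) : cs.signRep (σ i) = conjFlip (σ i) (cs.simple_mul_simple_self i) :=
  cs.lift_apply_simple cs.isLiftable_conjFlip i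

noncomputable def invSign (ω : List B) (t : W) : ℤˣ :=
  ((cs.rightInvSeq ω).map (reflSign t)).prod

lemma signRep_wordProd (ω : List B) (t : W) (ε : ℤˣ) :
    cs.signRep (π ω) (t, ε) = (π ω * t * (π ω)⁻¹, cs.invSign ω t * ε) := by
  induction ω generalizing ε with
  | nil => simp [invSign]
  | cons i ω ih =>
    rw [cs.wordProd_cons, map_mul, Equiv.Perm.mul_apply, ih, signRep_simple,
      conjFlip_apply]
    refine Prod.ext ?_ ?_
    · simp only [mul_inv_rev, cs.inv_simple, mul_assoc]
    · rw [reflSign_conj]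
      simp only [invSign, rightInvSeq, List.map_cons, List.prod_cons, mul_assoc]

lemma invSign_eq_one_of_notMem {ω : List B} {t : W} (ht : t ∉ cs.rightInvSeq ω) :
    cs.invSign ω t = 1 :=
  List.prod_eq_one fun u hu => by
    obtain ⟨v, hv, rfl⟩ := List.mem_map.mp hu
    exact if_neg fun h : t = v => ht (h ▸ hv)

lemma simple_mem_rightInvSeq_of_length_mul_simple_lt {ω : List B} {i : B}
    (h : ℓ (π ω * σ i) < ℓ (π ω)) : σ i ∈ cs.rightInvSeq ω := by
  obtain ⟨υ, hυ, hυω⟩ := cs.exists_isReduced (π ω * σ i)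
  have hnotMem : σ i ∉ cs.rightInvSeq υ := fun hmem => by
    have hlt := (cs.isRightInversion_of_mem_rightInvSeq hυ hmem).2
    rw [← hυω, cs.simple_mul_simple_cancel_right] at hlt
    exact absurd h (Nat.lt_asymm hlt)
  have hword : π ω = π υ * σ i := by rw [← hυω, cs.simple_mul_simple_cancel_right]
  -- `signRep (π υ * σ i)` flips the sign of `σ i` once, and `signRep (π υ)` does not
  have hsign := congrArg Prod.snd (cs.signRep_wordProd ω (σ i) 1)
  rw [hword, map_mul, Equiv.Perm.mul_apply, signRep_simple, conjFlip_apply,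
    cs.simple_mul_simple_self, one_mul, signRep_wordProd,
    invSign_eq_one_of_notMem cs hnotMem] at hsign
  by_contra hmem
  rw [invSign_eq_one_of_notMem cs hmem] at hsign
  simp [reflSign] at hsign

lemma exists_eraseIdx_of_length_mul_simple_lt {ω : List B} {i : B}
    (h : ℓ (π ω * σ i) < ℓ (π ω)) : ∃ k, π ω * σ i = π (ω.eraseIdx k) := by
  obtain ⟨k, hk, hget⟩ :=
    List.mem_iff_getElem.mp (cs.simple_mem_rightInvSeq_of_length_mul_simple_lt h)
  refine ⟨k, ?_⟩
  rw [← cs.wordProd_mul_getD_rightInvSeq, List.getD_eq_getElem _ 1 hk, hget]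

lemma simple_mul_mul_simple_eq_self_of_lt {i j : B} {v : W} (hi : ℓ v < ℓ (σ i * v))
    (hj : ℓ v < ℓ (v * σ j)) (h : ℓ (σ i * v * σ j) = ℓ v) : σ i * v * σ j = v := by
  obtain ⟨ω, hω, rfl⟩ := cs.exists_isReduced v
  obtain ⟨_ | k, hk⟩ := cs.exists_eraseIdx_of_length_mul_simple_lt (ω := i :: ω) (i := j)
    (by rw [cs.wordProd_cons, h]; exact hi)
  · simpa [cs.wordProd_cons] using hk
  · rw [List.eraseIdx_cons_succ, cs.wordProd_cons, cs.wordProd_cons, mul_assoc,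
      mul_right_inj] at hk
    have := cs.length_wordProd_le (ω.eraseIdx k)
    have := List.length_eraseIdx_le ω k
    rw [← hk, ← hω.eq] at *
    omega

lemma simple_mul_mul_simple_eq_self {i j : B} {v : W} (h₁ : ℓ (σ i * v) = ℓ (v * σ j))
    (h₂ : ℓ (σ i * v * σ j) = ℓ v) : σ i * v * σ j = v := by
  rcases cs.length_simple_mul v i with hi | hi
  · exact cs.simple_mul_mul_simple_eq_self_of_lt (by omega)
      (by have := cs.length_mul_simple v j; omega) h₂
  · -- the descent case is the ascent case for `σ i * v`
    have key := cs.simple_mul_mul_simple_eq_self_of_lt (i := i) (j := j) (v := σ i * v)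
      (by rw [cs.simple_mul_simple_cancel_left]; omega) (by rw [h₂]; omega)
      (by rw [← mul_assoc, cs.simple_mul_simple_self, one_mul, ← h₁])
    rw [← mul_assoc, cs.simple_mul_simple_self, one_mul] at key
    rw [mul_assoc, key, ← mul_assoc, cs.simple_mul_simple_self, one_mul]

end CoxeterSystem

namespace IsSimpleElt

open SemidirectProduct

variable {B W Ω : Type*} [Group W] [Group Ω] {M : CoxeterMatrix B} {cs : CoxeterSystem M W}
  {φ : Ω →* MulAut W} {s : W ⋊[φ] Ω}

lemma mul_self (hs : IsSimpleElt cs s) : s * s = 1 := by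
  obtain ⟨i, rfl⟩ := hs
  rw [← map_mul, cs.simple_mul_simple_self, map_one]

lemma mul_eq_iff (hs : IsSimpleElt cs s) {x y : W ⋊[φ] Ω} : s * x = y ↔ x = s * y := by
  constructor <;> rintro rfl <;> rw [← mul_assoc, hs.mul_self, one_mul]

lemma eq_mul_iff (hs : IsSimpleElt cs s) {x y : W ⋊[φ] Ω} : x * s = y ↔ x = y * s := by
  constructor <;> rintro rfl <;> rw [mul_assoc, hs.mul_self, mul_one]

lemma extLen_mul_left (hs : IsSimpleElt cs s) (x : W ⋊[φ] Ω) :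
    extLen cs (s * x) = extLen cs x + 1 ∨ extLen cs (s * x) + 1 = extLen cs x := by
  obtain ⟨i, rfl⟩ := hs
  simpa [extLen] using cs.length_simple_mul x.left i

lemma exists_left_mul_eq (hφ : ∀ (τ : Ω) (i : B), ∃ j : B, φ τ (cs.simple i) = cs.simple j)
    (hs : IsSimpleElt cs s) (x : W ⋊[φ] Ω) : ∃ j, (x * s).left = x.left * cs.simple j := by
  obtain ⟨i, rfl⟩ := hs
  obtain ⟨j, hj⟩ := hφ x.right i
  exact ⟨j, by simp [hj]⟩

lemma extLen_mul_right (hφ : ∀ (τ : Ω) (i : B), ∃ j : B, φ τ (cs.simple i) = cs.simple j)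
    (hs : IsSimpleElt cs s) (x : W ⋊[φ] Ω) :
    extLen cs (x * s) = extLen cs x + 1 ∨ extLen cs (x * s) + 1 = extLen cs x := by
  obtain ⟨j, hj⟩ := hs.exists_left_mul_eq hφ x
  simpa [extLen, hj] using cs.length_mul_simple x.left j

lemma mul_mul_eq_self (hφ : ∀ (τ : Ω) (i : B), ∃ j : B, φ τ (cs.simple i) = cs.simple j)
    (hs : IsSimpleElt cs s) {y : W ⋊[φ] Ω} (h₁ : extLen cs (s * y) = extLen cs (y * s))
    (h₂ : extLen cs (s * y * s) = extLen cs y) : s * y * s = y := by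
  obtain ⟨j, hj⟩ := hs.exists_left_mul_eq hφ y
  obtain ⟨i, rfl⟩ := hs
  have hleft : (inl (cs.simple i) * y * inl (cs.simple i) : W ⋊[φ] Ω).left =
      cs.simple i * y.left * cs.simple j := by
    rw [mul_assoc, mul_left, hj]; simp [mul_assoc]
  have hsy : (inl (cs.simple i) * y : W ⋊[φ] Ω).left = cs.simple i * y.left := by simp
  simp only [extLen, hleft, hsy, hj] at h₁ h₂
  ext
  · rw [hleft, cs.simple_mul_mul_simple_eq_self h₁ h₂]
  · simp

end IsSimpleElt

namespace Module.Basis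

variable {ι R A : Type*} [CommSemiring R] [Semiring A] [Algebra R A] (b : Basis ι R A)

lemma repr_mul_apply_left (a x : A) (i : ι) :
    b.repr (a * x) i = (b.repr x).sum fun j c => c * b.repr (a * b j) i := by
  conv_lhs => rw [← b.linearCombination_repr x, Finsupp.linearCombination_apply, Finsupp.sum,
    Finset.mul_sum, map_sum, Finset.sum_apply']
  refine Finset.sum_congr rfl fun j _ => ?_
  rw [mul_smul_comm, map_smul, Finsupp.smul_apply, smul_eq_mul]

lemma repr_mul_apply_right (a x : A) (i : ι) :
    b.repr (x * a) i = (b.repr x).sum fun j c => c * b.repr (b j * a) i := by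
  conv_lhs => rw [← b.linearCombination_repr x, Finsupp.linearCombination_apply, Finsupp.sum,
    Finset.sum_mul, map_sum, Finset.sum_apply']
  refine Finset.sum_congr rfl fun j _ => ?_
  rw [smul_mul_assoc, map_smul, Finsupp.smul_apply, smul_eq_mul]

end Module.Basis

section HeckeCoefficients

variable {B W Ω H : Type*} [Group W] [Group Ω] [Ring H] [Algebra ℂ H]
  {M : CoxeterMatrix B} {cs : CoxeterSystem M W} {φ : Ω →* MulAut W}
  {T : Module.Basis (W ⋊[φ] Ω) ℂ H} {q : W ⋊[φ] Ω → ℕ} {s : W ⋊[φ] Ω}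
  {z : H} {L : ℕ}

section Left

variable (hTleft : ∀ s x : W ⋊[φ] Ω, IsSimpleElt cs s →
  (extLen cs x < extLen cs (s * x) → T s * T x = T (s * x)) ∧
  (extLen cs (s * x) < extLen cs x →
    T s * T x = ((q s : ℂ) - 1) • T x + (q s : ℂ) • T (s * x)))
include hTleft

lemma repr_T_simple_mul_T_of_extLen_lt (hs : IsSimpleElt cs s) {b w : W ⋊[φ] Ω}
    (hbw : extLen cs b < extLen cs w) : T.repr (T s * T b) w = T.repr (T (s * b)) w := by
  rcases hs.extLen_mul_left b with hup | hdown
  · rw [(hTleft s b hs).1 (by omega)]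
  · have hb : b ≠ w := by rintro rfl; omega
    have hsb : s * b ≠ w := by rintro rfl; omega
    simp [(hTleft s b hs).2 (by omega), hb, hsb]

lemma repr_T_simple_mul_of_extLen_gt (hs : IsSimpleElt cs s)
    (hsupp : ∀ x, L < extLen cs x → T.repr z x = 0) {w : W ⋊[φ] Ω} (hw : L < extLen cs w) :
    T.repr (T s * z) w = T.repr z (s * w) := by
  classical
  rw [T.repr_mul_apply_left]
  calc (T.repr z).sum (fun b c => c * T.repr (T s * T b) w)
      = (T.repr z).sum (fun b c => if b = s * w then c else 0) := by
        refine Finsupp.sum_congr fun b hb => ?_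
        have hbL : extLen cs b ≤ L := by
          by_contra! h
          exact Finsupp.mem_support_iff.mp hb (hsupp b h)
        rw [repr_T_simple_mul_T_of_extLen_lt hTleft hs (by omega), T.repr_self,
          Finsupp.single_apply]
        simp [hs.mul_eq_iff]
    _ = T.repr z (s * w) := Finsupp.sum_ite_self_eq' _ _

end Left

section Right

variable (hφ : ∀ (τ : Ω) (i : B), ∃ j : B, φ τ (cs.simple i) = cs.simple j)
  (hTright : ∀ s x : W ⋊[φ] Ω, IsSimpleElt cs s →
    (extLen cs x < extLen cs (x * s) → T x * T s = T (x * s)) ∧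
    (extLen cs (x * s) < extLen cs x →
      T x * T s = ((q s : ℂ) - 1) • T x + (q s : ℂ) • T (x * s)))
include hφ hTright

lemma repr_T_mul_T_simple_of_extLen_lt (hs : IsSimpleElt cs s) {b w : W ⋊[φ] Ω}
    (hbw : extLen cs b < extLen cs w) : T.repr (T b * T s) w = T.repr (T (b * s)) w := by
  rcases hs.extLen_mul_right hφ b with hup | hdown
  · rw [(hTright s b hs).1 (by omega)]
  · have hb : b ≠ w := by rintro rfl; omega
    have hbs : b * s ≠ w := by rintro rfl; omega
    simp [(hTright s b hs).2 (by omega), hb, hbs]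

lemma repr_mul_T_simple_of_extLen_gt (hs : IsSimpleElt cs s)
    (hsupp : ∀ x, L < extLen cs x → T.repr z x = 0) {w : W ⋊[φ] Ω} (hw : L < extLen cs w) :
    T.repr (z * T s) w = T.repr z (w * s) := by
  classical
  rw [T.repr_mul_apply_right]
  calc (T.repr z).sum (fun b c => c * T.repr (T b * T s) w)
      = (T.repr z).sum (fun b c => if b = w * s then c else 0) := by
        refine Finsupp.sum_congr fun b hb => ?_
        have hbL : extLen cs b ≤ L := by
          by_contra! h
          exact Finsupp.mem_support_iff.mp hb (hsupp b h)
        rw [repr_T_mul_T_simple_of_extLen_lt hφ hTright hs (by omega), T.repr_self,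
          Finsupp.single_apply]
        simp [hs.eq_mul_iff]
    _ = T.repr z (w * s) := Finsupp.sum_ite_self_eq' _ _

end Right

end HeckeCoefficients

lemma LaterallyConj.extLen_eq {B W Ω : Type*} [Group W] [Group Ω] {M : CoxeterMatrix B}
    {cs : CoxeterSystem M W} {φ : Ω →* MulAut W} {x x' : W ⋊[φ] Ω}
    (h : LaterallyConj cs x x') : extLen cs x' = extLen cs x := by
  obtain ⟨_ | n, ss, -, hlen, rfl⟩ := h
  exacts [rfl, hlen n n.lt_succ_self]

section CentralCoefficients

variable {B W Ω H : Type*} [Group W] [Group Ω] [Ring H] [Algebra ℂ H]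
  {M : CoxeterMatrix B} {cs : CoxeterSystem M W} {φ : Ω →* MulAut W}
  {T : Module.Basis (W ⋊[φ] Ω) ℂ H} {q : W ⋊[φ] Ω → ℕ} {z : H} {L : ℕ}
  (hφ : ∀ (τ : Ω) (i : B), ∃ j : B, φ τ (cs.simple i) = cs.simple j)
  (hTleft : ∀ s x : W ⋊[φ] Ω, IsSimpleElt cs s →
    (extLen cs x < extLen cs (s * x) → T s * T x = T (s * x)) ∧
    (extLen cs (s * x) < extLen cs x →
      T s * T x = ((q s : ℂ) - 1) • T x + (q s : ℂ) • T (s * x)))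
  (hTright : ∀ s x : W ⋊[φ] Ω, IsSimpleElt cs s →
    (extLen cs x < extLen cs (x * s) → T x * T s = T (x * s)) ∧
    (extLen cs (x * s) < extLen cs x →
      T x * T s = ((q s : ℂ) - 1) • T x + (q s : ℂ) • T (x * s)))
  (hz : z ∈ Set.center H) (hsupp : ∀ x, L < extLen cs x → T.repr z x = 0)
include hφ hTleft hTright hz hsupp

lemma repr_simple_mul_eq_repr_mul_simple {s w : W ⋊[φ] Ω} (hs : IsSimpleElt cs s)
    (hw : L < extLen cs w) : T.repr z (s * w) = T.repr z (w * s) := by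
  rw [← repr_T_simple_mul_of_extLen_gt hTleft hs hsupp hw,
    ← repr_mul_T_simple_of_extLen_gt hφ hTright hs hsupp hw,
    ((Set.mem_center_iff.mp hz).comm (T s)).eq]

lemma repr_simple_mul_mul_simple_eq {s y : W ⋊[φ] Ω} (hs : IsSimpleElt cs s)
    (hy : extLen cs y = L) (hsys : extLen cs (s * y * s) = L) :
    T.repr z (s * y * s) = T.repr z y := by
  rcases hs.extLen_mul_left y with hsy | hsy
  · have h := repr_simple_mul_eq_repr_mul_simple hφ hTleft hTright hz hsupp hs
      (w := s * y) (by omega)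
    rwa [← mul_assoc, hs.mul_self, one_mul, eq_comm] at h
  rcases hs.extLen_mul_right hφ y with hys | hys
  · have h := repr_simple_mul_eq_repr_mul_simple hφ hTleft hTright hz hsupp hs
      (w := y * s) (by omega)
    rwa [mul_assoc, hs.mul_self, mul_one, ← mul_assoc] at h
  · rw [hs.mul_mul_eq_self hφ (by omega) (by omega)]

lemma repr_eq_of_laterallyConj {x x' : W ⋊[φ] Ω} (h : LaterallyConj cs x x')
    (hx : extLen cs x = L) : T.repr z x' = T.repr z x := by
  obtain ⟨n, ss, hsimple, hlen, rfl⟩ := h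
  have hlenL : ∀ k ≤ n, extLen cs (conjSeqW x ss k) = L := by
    rintro (_ | k) hk
    exacts [hx, (hlen k hk).trans hx]
  suffices ∀ k ≤ n, T.repr z (conjSeqW x ss k) = T.repr z x from this n le_rfl
  intro k
  induction k with
  | zero => intro _; rfl
  | succ k ih =>
    intro hk
    rw [conjSeqW, repr_simple_mul_mul_simple_eq hφ hTleft hTright hz hsupp (hsimple k hk)
      (hlenL k (by omega)) (hlenL (k + 1) hk)]
    exact ih (by omega)

lemma repr_eq_zero_of_directDiamond {y : W ⋊[φ] Ω} (h : DirectDiamond cs y)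
    (hy : extLen cs y = L) : T.repr z y = 0 := by
  obtain ⟨s, hs, hsy, hys, hne⟩ := h
  have hsy' : extLen cs (s * y) = L + 1 := by have := hs.extLen_mul_left y; omega
  have hys' : extLen cs (y * s) = L + 1 := by have := hs.extLen_mul_right hφ y; omega
  have hsys : L < extLen cs (s * y * s) := by
    rcases hs.extLen_mul_right hφ (s * y) with h | h
    · omega
    · exact absurd (hs.mul_mul_eq_self hφ (by omega) (by omega)) hne
  calc T.repr z y = T.repr z (s * (s * y)) := by rw [← mul_assoc, hs.mul_self, one_mul]
    _ = T.repr z (s * y * s) :=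
      repr_simple_mul_eq_repr_mul_simple hφ hTleft hTright hz hsupp hs (by omega)
    _ = 0 := hsupp _ hsys

end CentralCoefficients

theorem statement15_general {B W Ω H : Type*} [Group W] [Group Ω] [Ring H] [Algebra ℂ H]
    {M : CoxeterMatrix B} (cs : CoxeterSystem M W) (φ : Ω →* MulAut W)
    (hφ : ∀ (τ : Ω) (i : B), ∃ j : B, φ τ (cs.simple i) = cs.simple j)
    (T : Module.Basis (W ⋊[φ] Ω) ℂ H)
    (q : W ⋊[φ] Ω → ℕ)
    (hTleft : ∀ s x : W ⋊[φ] Ω, IsSimpleElt cs s →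
      (extLen cs x < extLen cs (s * x) → T s * T x = T (s * x)) ∧
      (extLen cs (s * x) < extLen cs x →
        T s * T x = ((q s : ℂ) - 1) • T x + (q s : ℂ) • T (s * x)))
    (hTright : ∀ s x : W ⋊[φ] Ω, IsSimpleElt cs s →
      (extLen cs x < extLen cs (x * s) → T x * T s = T (x * s)) ∧
      (extLen cs (x * s) < extLen cs x →
        T x * T s = ((q s : ℂ) - 1) • T x + (q s : ℂ) • T (x * s)))
    (Λ : Subgroup (W ⋊[φ] Ω))
    (hdiam : ∀ x : W ⋊[φ] Ω, x ∉ Λ → Diamond cs x)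
    (L : ℕ) (τ : Ω) (z : H) (hz : z ∈ Set.center H)
    (hzsupp : ∀ x : W ⋊[φ] Ω, (L < extLen cs x ∨ x.right ≠ τ) → T.repr z x = 0)
    (x : W ⋊[φ] Ω) (hxΛ : x ∉ Λ) (hxL : extLen cs x = L) :
    T.repr z x = 0 := by
  have hsupp : ∀ u, L < extLen cs u → T.repr z u = 0 := fun u hu => hzsupp u (Or.inl hu)
  obtain ⟨x', hlat, hdirect⟩ := hdiam x hxΛ
  rw [← repr_eq_of_laterallyConj hφ hTleft hTright hz hsupp hlat hxL]
  exact repr_eq_zero_of_directDiamond hφ hTleft hTright hz hsupp hdirect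
    (hlat.extLen_eq.trans hxL)

/-- if `z ∈ Z_{L,τ}(𝓗)`, `x ∉ Λ` and `ℓ(x) = L`, then `z_x = 0`. -/
theorem statement15 {B W Ω H : Type*} [Group W] [Group Ω] [Ring H] [Algebra ℂ H]
    {M : CoxeterMatrix B} (cs : CoxeterSystem M W) (φ : Ω →* MulAut W)
    (hφ : ∀ (τ : Ω) (i : B), ∃ j : B, φ τ (cs.simple i) = cs.simple j)
    (T : Module.Basis (W ⋊[φ] Ω) ℂ H)
    (q : W ⋊[φ] Ω → ℕ)
    (hq : ∀ s t : W ⋊[φ] Ω, IsSimpleElt cs s → IsSimpleElt cs t → IsConj s t → q s = q t)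
    (hTleft : ∀ s x : W ⋊[φ] Ω, IsSimpleElt cs s →
      (extLen cs x < extLen cs (s * x) → T s * T x = T (s * x)) ∧
      (extLen cs (s * x) < extLen cs x →
        T s * T x = ((q s : ℂ) - 1) • T x + (q s : ℂ) • T (s * x)))
    (hTright : ∀ s x : W ⋊[φ] Ω, IsSimpleElt cs s →
      (extLen cs x < extLen cs (x * s) → T x * T s = T (x * s)) ∧
      (extLen cs (x * s) < extLen cs x →
        T x * T s = ((q s : ℂ) - 1) • T x + (q s : ℂ) • T (x * s)))
    (hTom : ∀ (τ : Ω) (x : W ⋊[φ] Ω),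
      T (SemidirectProduct.inr τ * x) = T (SemidirectProduct.inr τ) * T x ∧
      T (x * SemidirectProduct.inr τ) = T x * T (SemidirectProduct.inr τ))
    (Λ : Subgroup (W ⋊[φ] Ω)) (hΛ : Λ.Normal)
    (S₀ : Set (W ⋊[φ] Ω)) (hS₀ : ∀ s ∈ S₀, IsSimpleElt cs s)
    (hmeet : Λ ⊓ Subgroup.closure S₀ = ⊥)
    (hjoin : ∀ x : W ⋊[φ] Ω, ∃ t ∈ Λ, ∃ u ∈ Subgroup.closure S₀, x = t * u)
    (hconstlen : ∀ t ∈ Λ, ∀ u ∈ Subgroup.closure S₀,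
      extLen cs (u * t * u⁻¹) = extLen cs t)
    (hdiam : ∀ x : W ⋊[φ] Ω, x ∉ Λ → Diamond cs x)
    (L : ℕ) (τ : Ω) (z : H) (hz : z ∈ Set.center H)
    (hzsupp : ∀ x : W ⋊[φ] Ω, (L < extLen cs x ∨ x.right ≠ τ) → T.repr z x = 0)
    (x : W ⋊[φ] Ω) (hxΛ : x ∉ Λ) (hxL : extLen cs x = L) :
    T.repr z x = 0 :=
  statement15_general cs φ hφ T q hTleft hTright Λ hdiam L τ z hz hzsupp x hxΛ hxL
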